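/- Total stopping time equation: for every k ∈ ℕ, every positive integer n and every t ∈ ℕ with g_k^t(n) = 3^k, let m = #{i : 0 ≤ i < t and g_k^i(n) is odd} and S = Σ_{i < t, g_k^i(n) odd} 3^{o_i} · 2^{e_i}, where o_i = #{j : i < j < t and g_k^j(n) is odd} and e_i = #{j : 0 ≤ j < i and g_k^j(n) is even}. Then 2^t · 3^k = 2^m · (3^m · n + 3^k · S). -/

import Mathlib

/-!
Forward induction along the trajectory `xᵢ = g_k^i(n)`. With `Eᵢ`, `Oᵢ` the numbers of even and
odd steps among the first `i` and `Sᵢ` the partial sum, the invariant is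
`2^Eᵢ · xᵢ = 3^Oᵢ · n + 3^k · Sᵢ`: an even step halves `xᵢ` and raises `Eᵢ`, an odd step multiplies
the right-hand side by 3 and adds `3^k · 2^Eᵢ`. At `i = t` multiply by `2^Oₜ`, as `Oₜ + Eₜ = t`.
-/

open Finset

/-- The generalized Collatz map `g k` : halve if even, `3n + 3^k` if odd. -/
def g (k : ℕ) (n : ℕ) : ℕ := if n % 2 = 0 then n / 2 else 3 * n + 3 ^ k

section Trajectory

variable (k n : ℕ)

lemma two_mul_g_of_even {x : ℕ} (h : Even x) : 2 * g k x = x := by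
  rw [g, if_pos (Nat.even_iff.mp h)]
  exact Nat.mul_div_cancel' (even_iff_two_dvd.mp h)

lemma g_of_odd {x : ℕ} (h : Odd x) : g k x = 3 * x + 3 ^ k := by
  rw [g, if_neg (Nat.odd_iff.mp h ▸ by decide)]

def oddSteps (i : ℕ) : Finset ℕ := (range i).filter fun j => Odd ((g k)^[j] n)

def evenSteps (i : ℕ) : Finset ℕ := (range i).filter fun j => Even ((g k)^[j] n)

def oddStepsBetween (a b : ℕ) : Finset ℕ := (Ioo a b).filter fun j => Odd ((g k)^[j] n)

/-- The coefficient of `3 ^ k` accumulated by the first `i` steps of the trajectory of `n`. -/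
def paritySum (i : ℕ) : ℕ :=
  ∑ j ∈ oddSteps k n i, 3 ^ #(oddStepsBetween k n j i) * 2 ^ #(evenSteps k n j)

lemma card_oddSteps_add_card_evenSteps (i : ℕ) : #(oddSteps k n i) + #(evenSteps k n i) = i := by
  simpa [oddSteps, evenSteps, Nat.not_odd_iff_even] using
    card_filter_add_card_filter_not (s := range i) (fun j => Odd ((g k)^[j] n))

variable {k n} {i : ℕ}

lemma oddSteps_succ_of_odd (h : Odd ((g k)^[i] n)) :
    oddSteps k n (i + 1) = insert i (oddSteps k n i) := by
  simp [oddSteps, range_add_one, filter_insert, h]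

lemma oddSteps_succ_of_even (h : Even ((g k)^[i] n)) : oddSteps k n (i + 1) = oddSteps k n i := by
  simp [oddSteps, range_add_one, filter_insert, Nat.not_odd_iff_even.mpr h]

lemma evenSteps_succ_of_odd (h : Odd ((g k)^[i] n)) : evenSteps k n (i + 1) = evenSteps k n i := by
  simp [evenSteps, range_add_one, filter_insert, Nat.not_even_iff_odd.mpr h]

lemma evenSteps_succ_of_even (h : Even ((g k)^[i] n)) :
    evenSteps k n (i + 1) = insert i (evenSteps k n i) := by
  simp [evenSteps, range_add_one, filter_insert, h]

lemma oddStepsBetween_succ_of_odd {j : ℕ} (hj : j < i) (h : Odd ((g k)^[i] n)) :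
    oddStepsBetween k n j (i + 1) = insert i (oddStepsBetween k n j i) := by
  simp [oddStepsBetween, Ioo_add_one_right_eq_Ioc, ← Ioo_insert_right hj, filter_insert, h]

lemma oddStepsBetween_succ_of_even {j : ℕ} (hj : j < i) (h : Even ((g k)^[i] n)) :
    oddStepsBetween k n j (i + 1) = oddStepsBetween k n j i := by
  simp [oddStepsBetween, Ioo_add_one_right_eq_Ioc, ← Ioo_insert_right hj, filter_insert,
    Nat.not_odd_iff_even.mpr h]

lemma lt_of_mem_oddSteps {j : ℕ} (hj : j ∈ oddSteps k n i) : j < i :=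
  mem_range.mp (mem_filter.mp hj).1

lemma paritySum_succ_of_odd (h : Odd ((g k)^[i] n)) :
    paritySum k n (i + 1) = 3 * paritySum k n i + 2 ^ #(evenSteps k n i) := by
  have hi : i ∉ oddSteps k n i := fun hi => (lt_of_mem_oddSteps hi).false
  rw [paritySum, oddSteps_succ_of_odd h, sum_insert hi, paritySum, mul_sum, add_comm]
  congr 1
  · refine sum_congr rfl fun j hj => ?_
    have hji := lt_of_mem_oddSteps hj
    rw [oddStepsBetween_succ_of_odd hji h, card_insert_of_notMem (by simp [oddStepsBetween]),
      pow_succ]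
    ring
  · simp [oddStepsBetween]

lemma paritySum_succ_of_even (h : Even ((g k)^[i] n)) : paritySum k n (i + 1) = paritySum k n i := by
  rw [paritySum, oddSteps_succ_of_even h, paritySum]
  exact sum_congr rfl fun j hj => by rw [oddStepsBetween_succ_of_even (lt_of_mem_oddSteps hj) h]

variable (k n)

theorem two_pow_card_evenSteps_mul_iterate (i : ℕ) :
    2 ^ #(evenSteps k n i) * (g k)^[i] n = 3 ^ #(oddSteps k n i) * n + 3 ^ k * paritySum k n i := by
  induction i with
  | zero => simp [evenSteps, oddSteps, paritySum]
  | succ i ih =>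
    rw [Function.iterate_succ_apply']
    rcases Nat.even_or_odd ((g k)^[i] n) with h | h
    · rw [evenSteps_succ_of_even h, oddSteps_succ_of_even h, paritySum_succ_of_even h,
        card_insert_of_notMem (by simp [evenSteps]), pow_succ, mul_assoc, two_mul_g_of_even k h, ih]
    · rw [evenSteps_succ_of_odd h, oddSteps_succ_of_odd h, paritySum_succ_of_odd h,
        card_insert_of_notMem (by simp [oddSteps]), g_of_odd k h, pow_succ]
      linear_combination 3 * ih

end Trajectory

theorem total_stopping_time_eq_general (k n t : ℕ) (ht : (g k)^[t] n = 3 ^ k) :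
    2 ^ t * 3 ^ k =
      2 ^ ((Finset.range t).filter (fun i => Odd ((g k)^[i] n))).card *
        (3 ^ ((Finset.range t).filter (fun i => Odd ((g k)^[i] n))).card * n +
         3 ^ k * ∑ i ∈ (Finset.range t).filter (fun i => Odd ((g k)^[i] n)),
           3 ^ ((Finset.Ioo i t).filter (fun j => Odd ((g k)^[j] n))).card *
           2 ^ ((Finset.range i).filter (fun j => Even ((g k)^[j] n))).card) := by
  have key := two_pow_card_evenSteps_mul_iterate k n t
  rw [ht] at key
  calc 2 ^ t * 3 ^ k = 2 ^ #(oddSteps k n t) * (2 ^ #(evenSteps k n t) * 3 ^ k) := by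
        rw [← mul_assoc, ← pow_add, card_oddSteps_add_card_evenSteps]
    _ = _ := by rw [key]; rfl

theorem total_stopping_time_eq (k n t : ℕ) (hn : 0 < n) (ht : (g k)^[t] n = 3 ^ k) :
    2 ^ t * 3 ^ k =
      2 ^ ((Finset.range t).filter (fun i => Odd ((g k)^[i] n))).card *
        (3 ^ ((Finset.range t).filter (fun i => Odd ((g k)^[i] n))).card * n +
         3 ^ k * ∑ i ∈ (Finset.range t).filter (fun i => Odd ((g k)^[i] n)),
           3 ^ ((Finset.Ioo i t).filter (fun j => Odd ((g k)^[j] n))).card *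
           2 ^ ((Finset.range i).filter (fun j => Even ((g k)^[j] n))).card) :=
  total_stopping_time_eq_general k n t ht
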